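/- Identify ℝ^7 with the imaginary octonions and let × be the 7-dimensional cross product a × b = Im(a * b). If g is a linear automorphism of ℝ^7 satisfying g(a × b) = g(a) × g(b) for all a, b, then g is orthogonal: ⟨g(a), g(b)⟩ = ⟨a, b⟩ for all a, b ∈ ℝ^7. -/
import Mathlib


/-- The three cyclic rotations of an ordered triple. -/
def rots7 (t : Fin 7 × Fin 7 × Fin 7) : List (Fin 7 × Fin 7 × Fin 7) :=
  [(t.1, t.2.1, t.2.2), (t.2.1, t.2.2, t.1), (t.2.2, t.1, t.2.1)]

/-- The structure constant of the Steiner product determined by the cyclically closed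
list `L` of oriented triples: `eps7 L i j x` is the coefficient of `s_x` in `s_i × s_j`. -/
def eps7 (L : List (Fin 7 × Fin 7 × Fin 7)) (i j x : Fin 7) : ℝ :=
  if (i, j, x) ∈ L then 1 else if (j, i, x) ∈ L then -1 else 0

/-- The Steiner product on `ℝ^7` determined by the oriented triples in `L`. -/
def cross7 (L : List (Fin 7 × Fin 7 × Fin 7)) (u v : Fin 7 → ℝ) : Fin 7 → ℝ :=
  fun x => ∑ i : Fin 7, ∑ j : Fin 7, eps7 L i j x * u i * v j

/-- The standard inner product on `ℝ^7`. -/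
def dot7 (u v : Fin 7 → ℝ) : ℝ := ∑ x : Fin 7, u x * v x

/-- The oriented triples of the octonion orientation (0-indexed), closed under cyclic
rotation; the induced Steiner product `cross7 LOct` is the 7-dimensional cross product
`a × b = Im(a * b)` under the identification `ℝ^7 ≅ Im(𝕆)`. -/
def LOct : List (Fin 7 × Fin 7 × Fin 7) :=
  ([(0,1,2), (0,3,4), (0,6,5), (1,3,5), (1,6,4), (2,5,4), (2,6,3)] :
      List (Fin 7 × Fin 7 × Fin 7)).flatMap rots7

/-- Integer version of the structure constants of `LOct`. -/
def epsZ (i j x : Fin 7) : ℤ :=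
  if (i, j, x) ∈ LOct then 1 else if (j, i, x) ∈ LOct then -1 else 0

lemma eps7_eq_epsZ (i j x : Fin 7) : eps7 LOct i j x = (epsZ i j x : ℝ) := by
  unfold eps7 epsZ; split_ifs <;> norm_num

lemma keyC : ∀ p i : Fin 7,
    (∑ x : Fin 7, ∑ q : Fin 7, epsZ p q x * epsZ i x q) = if p = i then -6 else 0 := by
  decide

lemma keyR (p i : Fin 7) :
    (∑ x : Fin 7, ∑ q : Fin 7, (epsZ p q x : ℝ) * (epsZ i x q : ℝ))
      = if p = i then (-6 : ℝ) else 0 := by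
  have h : (∑ x : Fin 7, ∑ q : Fin 7, (epsZ p q x : ℝ) * (epsZ i x q : ℝ))
      = ((∑ x : Fin 7, ∑ q : Fin 7, epsZ p q x * epsZ i x q : ℤ) : ℝ) := by
    push_cast; rfl
  rw [h, keyC p i]
  split_ifs <;> norm_num

/-- Left cross-multiplication as a linear map. -/
def crL (a : Fin 7 → ℝ) : (Fin 7 → ℝ) →ₗ[ℝ] (Fin 7 → ℝ) where
  toFun v := cross7 LOct a v
  map_add' u v := by
    funext x
    simp [cross7, mul_add, Finset.sum_add_distrib]
  map_smul' c v := by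
    funext x
    simp only [cross7, RingHom.id_apply, Pi.smul_apply, smul_eq_mul, Finset.mul_sum]
    congr 1; funext i; congr 1; funext j; ring

lemma crL_apply (a v : Fin 7 → ℝ) : crL a v = cross7 LOct a v := rfl

lemma crL_comm (g : (Fin 7 → ℝ) ≃ₗ[ℝ] (Fin 7 → ℝ))
    (hg : ∀ a b : Fin 7 → ℝ, g (cross7 LOct a b) = cross7 LOct (g a) (g b))
    (a : Fin 7 → ℝ) :
    crL (g a) = (g : (Fin 7 → ℝ) →ₗ[ℝ] (Fin 7 → ℝ)) ∘ₗ crL a ∘ₗ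
      (g.symm : (Fin 7 → ℝ) →ₗ[ℝ] (Fin 7 → ℝ)) := by
  refine LinearMap.ext fun v => ?_
  simp only [LinearMap.comp_apply, LinearEquiv.coe_coe, crL_apply]
  rw [hg, g.apply_symm_apply]

lemma trace_crL (a b : Fin 7 → ℝ) :
    LinearMap.trace ℝ (Fin 7 → ℝ) (crL a ∘ₗ crL b) = -6 * dot7 a b := by
  rw [LinearMap.trace_eq_matrix_trace ℝ (Pi.basisFun ℝ (Fin 7)), Matrix.trace]
  have hbasis : ∀ x : Fin 7, (Pi.basisFun ℝ (Fin 7)) x = Pi.single x 1 := by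
    intro x; funext j; simp [Pi.basisFun_apply]
  have hinner : ∀ x q : Fin 7,
      cross7 LOct b (Pi.single x 1) q = ∑ i : Fin 7, (epsZ i x q : ℝ) * b i := by
    intro x q
    simp only [cross7, eps7_eq_epsZ, Pi.single_apply, mul_ite, mul_one, mul_zero,
      Finset.sum_ite_eq', Finset.mem_univ, if_true]
  have hdiag : ∀ x : Fin 7,
      (LinearMap.toMatrix (Pi.basisFun ℝ (Fin 7)) (Pi.basisFun ℝ (Fin 7))
        (crL a ∘ₗ crL b)).diag x
        = ∑ p : Fin 7, ∑ i : Fin 7, ∑ q : Fin 7,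
            ((epsZ p q x : ℝ) * (epsZ i x q : ℝ)) * (a p * b i) := by
    intro x
    rw [Matrix.diag_apply, LinearMap.toMatrix_apply]
    simp only [Pi.basisFun_repr, LinearMap.comp_apply, hbasis, crL_apply]
    rw [show cross7 LOct b (Pi.single x 1) = (fun q => ∑ i : Fin 7, (epsZ i x q : ℝ) * b i)
      from funext fun q => hinner x q]
    simp only [cross7, eps7_eq_epsZ, Finset.mul_sum]
    refine Finset.sum_congr rfl fun p _ => ?_
    rw [Finset.sum_comm]
    refine Finset.sum_congr rfl fun i _ => Finset.sum_congr rfl fun q _ => ?_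
    ring
  rw [Finset.sum_congr rfl fun x _ => hdiag x, Finset.sum_comm]
  have hswap : ∀ p : Fin 7,
      (∑ x : Fin 7, ∑ i : Fin 7, ∑ q : Fin 7,
        ((epsZ p q x : ℝ) * (epsZ i x q : ℝ)) * (a p * b i))
      = ∑ i : Fin 7, (if p = i then (-6 : ℝ) else 0) * (a p * b i) := by
    intro p
    rw [Finset.sum_comm]
    refine Finset.sum_congr rfl fun i _ => ?_
    rw [← keyR p i]
    simp only [Finset.sum_mul]
  rw [Finset.sum_congr rfl fun p _ => hswap p]
  simp only [ite_mul, zero_mul, Finset.sum_ite_eq, Finset.mem_univ, if_true]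
  simp [dot7, Finset.mul_sum]

/-- Any linear automorphism `g` of `ℝ^7 ≅ Im(𝕆)` that commutes with the
7-dimensional cross product `a × b = Im(a * b)` is orthogonal:
`⟨g(a), g(b)⟩ = ⟨a, b⟩` for all `a, b`. -/
theorem cross_automorphism_orthogonal
    (g : (Fin 7 → ℝ) ≃ₗ[ℝ] (Fin 7 → ℝ))
    (hg : ∀ a b : Fin 7 → ℝ, g (cross7 LOct a b) = cross7 LOct (g a) (g b)) :
    ∀ a b : Fin 7 → ℝ, dot7 (g a) (g b) = dot7 a b := by
  intro a b
  have h1 : crL (g a) ∘ₗ crL (g b)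
      = (g : (Fin 7 → ℝ) →ₗ[ℝ] (Fin 7 → ℝ)) ∘ₗ (crL a ∘ₗ crL b) ∘ₗ
        (g.symm : (Fin 7 → ℝ) →ₗ[ℝ] (Fin 7 → ℝ)) := by
    rw [crL_comm g hg a, crL_comm g hg b]
    refine LinearMap.ext fun v => ?_
    simp [LinearMap.comp_apply]
  have h2 : LinearMap.trace ℝ (Fin 7 → ℝ) (crL (g a) ∘ₗ crL (g b))
      = LinearMap.trace ℝ (Fin 7 → ℝ) (crL a ∘ₗ crL b) := by
    rw [h1]
    have := LinearMap.trace_conj' (crL a ∘ₗ crL b) g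
    simpa [LinearEquiv.conj_apply, LinearMap.comp_assoc] using this
  rw [trace_crL, trace_crL] at h2
  linarith
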